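/- For every even k = 2d ≥ 2, the group ℤ_3 wr ℤ^k does not have property R_∞: there exists an automorphism φ of ℤ_3 wr ℤ^{2d} with R(φ) < ∞ (one may take φ̄ to be the d-fold direct sum of the matrix ((0,1),(−1,−1)) ∈ GL(2,ℤ), which has order 3, together with multiplication by m = 2 on each summand ℤ/3ℤ; this φ has R(φ) = 3^d). -/

import Mathlib

/-- Twisted conjugacy relation for an automorphism `φ` of `G`:
`x ∼ y` iff `y = h * x * φ(h)⁻¹` for some `h`. -/
def twistedConj {G : Type*} [Group G] (φ : G ≃* G) (x y : G) : Prop :=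
  ∃ h : G, y = h * x * (φ h)⁻¹

/-- The set of Reidemeister (twisted conjugacy) classes of `φ`.
Its cardinality is the Reidemeister number `R(φ)`. -/
def ReidemeisterClasses {G : Type*} [Group G] (φ : G ≃* G) := Quot (twistedConj φ)

/-- `Lamp q k` is `Σ = ⨁_{x ∈ ℤ^k} ℤ/qℤ`: finitely supported functions `ℤ^k → ℤ/qℤ`. -/
abbrev Lamp (q k : ℕ) := (Fin k → ℤ) →₀ ZMod q

/-- The shift action of `ℤ^k` on `Σ`: `α(y)(δ_x) = δ_{x+y}`. -/
noncomputable def lampShift (q k : ℕ) :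
    Multiplicative (Fin k → ℤ) →* MulAut (Multiplicative (Lamp q k)) where
  toFun y := AddEquiv.toMultiplicative (Finsupp.domCongr (Equiv.addRight (Multiplicative.toAdd y)))
  map_one' := by
    refine MulEquiv.ext fun f => ?_
    refine Multiplicative.toAdd.injective ?_
    ext x
    simp
    rfl
  map_mul' y z := by
    refine MulEquiv.ext fun f => ?_
    refine Multiplicative.toAdd.injective ?_
    ext x
    simp [Equiv.Perm.mul_def, add_comm, add_assoc, add_left_comm]

/-- The restricted wreath product `ℤ_q wr ℤ^k = Σ ⋊ ℤ^k`. -/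
abbrev Wreath (q k : ℕ) :=
  SemidirectProduct (Multiplicative (Lamp q k)) (Multiplicative (Fin k → ℤ)) (lampShift q k)

/-- `δ_x ∈ Σ`: the function equal to `1` at `x` and `0` elsewhere (written multiplicatively). -/
noncomputable def lampDelta (q k : ℕ) (x : Fin k → ℤ) : Multiplicative (Lamp q k) :=
  Multiplicative.ofAdd (Finsupp.single x 1)

/-!
The automorphism `φ` acts on `ℤ^{2d}` by a block sum `A` of copies of `M = ((0, 1), (-1, -1))`,
which satisfies `M² + M + 1 = 0`, and on the lamps by `f ↦ -(f ∘ A⁻¹)`. Twisted conjugation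
moves the `ℤ^{2d}`-coordinate `y` to `z + y - A z`, so the class of `y` in the cokernel of
`1 - A` is an invariant. Conversely, once `y` is fixed, twisted conjugation by a lamp `g` adds
`g + g ∘ E⁻¹` with `E u = A u + y`; since `E³ = 1`, over `ℤ/3` the operator `1 + S` with `S³ = 1`
is invertible, with inverse `2 + S + 2S²`, so every lamp configuration is reached. Hence
`R(φ) = |coker(1 - A)| = |det(1 - M)|^d = 3^d`.
-/

theorem twistedConj_trans {G : Type*} [Group G] {φ : G ≃* G} {x y z : G}
    (hxy : twistedConj φ x y) (hyz : twistedConj φ y z) : twistedConj φ x z := by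
  obtain ⟨g, rfl⟩ := hxy
  obtain ⟨h, rfl⟩ := hyz
  exact ⟨h * g, by simp only [map_mul, mul_inv_rev, mul_assoc]⟩

section OrderThree

variable {V : Type*} [AddCommGroup V]

def AddEquiv.rangeOneSub (A : V ≃+ V) : AddSubgroup V :=
  (AddMonoidHom.id V - A.toAddMonoidHom).range

theorem AddEquiv.map_rangeOneSub_conj {W : Type*} [AddCommGroup W] (e : V ≃+ W) (A : W ≃+ W) :
    (e.trans (A.trans e.symm)).rangeOneSub.map (e : V →+ W) = A.rangeOneSub := by
  ext w
  simp only [AddEquiv.rangeOneSub, AddSubgroup.mem_map, AddMonoidHom.mem_range]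
  constructor
  · rintro ⟨_, ⟨z, rfl⟩, rfl⟩
    exact ⟨e z, by simp⟩
  · rintro ⟨z, rfl⟩
    exact ⟨_, ⟨e.symm z, rfl⟩, by simp⟩

theorem AddEquiv.affine_apply_apply_apply {A : V ≃+ V} (hA : ∀ v, A (A v) + A v + v = 0)
    (w u : V) : A (A (A u + w) + w) + w = u := by
  rw [map_add, map_add, map_add]
  linear_combination (norm := module) hA (A u) - hA u + hA w

theorem surjective_add_self_of_apply_apply_apply {M : Type*} [AddCommGroup M]
    [Module (ZMod 3) M] (S : M →+ M) (hS : ∀ m, S (S (S m)) = m) :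
    Function.Surjective fun m => m + S m := by
  intro t
  refine ⟨2 • t + S t + 2 • S (S t), ?_⟩
  have h3 : ∀ m : M, 3 • m = 0 := fun m => by
    rw [← Nat.cast_smul_eq_nsmul (ZMod 3), show ((3 : ℕ) : ZMod 3) = 0 from rfl, zero_smul]
  simp only [map_add, map_nsmul, hS]
  calc _ = t + 3 • (t + S t + S (S t)) := by abel
    _ = t := by rw [h3, add_zero]

end OrderThree

section Wreath

variable {q k : ℕ}

theorem toAdd_lampShift_apply (y : Multiplicative (Fin k → ℤ)) (f : Multiplicative (Lamp q k))
    (x : Fin k → ℤ) :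
    Multiplicative.toAdd (lampShift q k y f) x =
      Multiplicative.toAdd f (x - Multiplicative.toAdd y) := rfl

/-- `(f, y) ↦ (τ ∘ f ∘ A⁻¹, A y)`. -/
noncomputable def wreathAut (A : (Fin k → ℤ) ≃+ (Fin k → ℤ)) (τ : ZMod q ≃+ ZMod q) :
    Wreath q k ≃* Wreath q k :=
  SemidirectProduct.congr
    (AddEquiv.toMultiplicative
      ((Finsupp.domCongr A.toEquiv).trans (Finsupp.mapRange.addEquiv τ)))
    (AddEquiv.toMultiplicative A)
    (fun y => by
      ext f x
      simp [lampShift])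

variable {A : (Fin k → ℤ) ≃+ (Fin k → ℤ)}

theorem toAdd_right_mul_mul_wreathAut_inv (τ : ZMod q ≃+ ZMod q) (h x : Wreath q k) :
    Multiplicative.toAdd (h * x * (wreathAut A τ h)⁻¹).right =
      Multiplicative.toAdd h.right + Multiplicative.toAdd x.right
        - A (Multiplicative.toAdd h.right) := rfl

theorem toAdd_left_mul_mul_wreathAut_inv (τ : ZMod q ≃+ ZMod q) (g : Lamp q k) (x : Wreath q k)
    (u : Fin k → ℤ) :
    Multiplicative.toAdd
        ((⟨Multiplicative.ofAdd g, 1⟩ * x * (wreathAut A τ ⟨Multiplicative.ofAdd g, 1⟩)⁻¹).left) u =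
      g u + Multiplicative.toAdd x.left u - τ (g (A.symm (u - Multiplicative.toAdd x.right))) := by
  simp [wreathAut, toAdd_lampShift_apply, -SemidirectProduct.mk_eq_inl_mul_inr, sub_eq_add_neg]

theorem twistedConj_wreathAut_of_right_eq (hA : ∀ v, A (A v) + A v + v = 0)
    {x x' : Wreath 3 k} (hx : x.right = x'.right) :
    twistedConj (wreathAut A (AddEquiv.neg (ZMod 3))) x x' := by
  obtain ⟨f, y⟩ := x
  obtain ⟨f', y'⟩ := x'
  obtain rfl : y = y' := hx
  let E : Equiv.Perm (Fin k → ℤ) := A.toEquiv.trans (Equiv.addRight (Multiplicative.toAdd y))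
  have hE : ∀ u, E.symm (E.symm (E.symm u)) = u := fun u =>
    E.injective <| E.injective <| E.injective <| by
      simp only [Equiv.apply_symm_apply]
      exact (A.affine_apply_apply_apply hA _ u).symm
  let S : Lamp 3 k →+ Lamp 3 k := (Finsupp.domCongr E).toAddMonoidHom
  obtain ⟨g, hg⟩ := surjective_add_self_of_apply_apply_apply S
    (fun g => by ext u; simp [S, hE]) (Multiplicative.toAdd f' - Multiplicative.toAdd f)
  refine ⟨⟨Multiplicative.ofAdd g, 1⟩, ?_⟩
  ext1
  · refine Multiplicative.toAdd.injective (Finsupp.ext fun u => ?_)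
    have hgu : g u + g (A.symm (u - Multiplicative.toAdd y)) =
        Multiplicative.toAdd f' u - Multiplicative.toAdd f u := by
      simpa [S, E, sub_eq_add_neg] using DFunLike.congr_fun hg u
    rw [toAdd_left_mul_mul_wreathAut_inv, AddEquiv.neg_apply, sub_neg_eq_add]
    linear_combination -hgu
  · simp [wreathAut]

theorem twistedConj_wreathAut_iff (hA : ∀ v, A (A v) + A v + v = 0) (x x' : Wreath 3 k) :
    twistedConj (wreathAut A (AddEquiv.neg (ZMod 3))) x x' ↔
      (QuotientAddGroup.mk (Multiplicative.toAdd x.right) : (Fin k → ℤ) ⧸ A.rangeOneSub) =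
        QuotientAddGroup.mk (Multiplicative.toAdd x'.right) := by
  rw [QuotientAddGroup.eq_iff_sub_mem]
  constructor
  · rintro ⟨h, rfl⟩
    refine ⟨-Multiplicative.toAdd h.right, ?_⟩
    simp only [toAdd_right_mul_mul_wreathAut_inv, AddMonoidHom.sub_apply, AddMonoidHom.id_apply,
      AddEquiv.coe_toAddMonoidHom, map_neg]
    abel
  · rintro ⟨z, hz⟩
    have hz' : z - A z = Multiplicative.toAdd x.right - Multiplicative.toAdd x'.right := hz
    refine twistedConj_trans ⟨SemidirectProduct.inr (Multiplicative.ofAdd (-z)), rfl⟩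
      (twistedConj_wreathAut_of_right_eq hA (Multiplicative.toAdd.injective ?_))
    change -z + Multiplicative.toAdd x.right - A (-z) = _
    rw [map_neg]
    linear_combination (norm := module) -hz'

noncomputable def reidemeisterClassesEquiv (hA : ∀ v, A (A v) + A v + v = 0) :
    ReidemeisterClasses (wreathAut A (AddEquiv.neg (ZMod 3))) ≃ (Fin k → ℤ) ⧸ A.rangeOneSub :=
  Equiv.ofBijective
    (Quot.lift (fun x => QuotientAddGroup.mk (Multiplicative.toAdd x.right))
      fun x x' h => (twistedConj_wreathAut_iff hA x x').mp h)
    ⟨fun c c' => Quot.induction_on₂ c c' fun x x' h =>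
        Quot.sound ((twistedConj_wreathAut_iff hA x x').mpr h),
      fun v => QuotientAddGroup.induction_on v fun v =>
        ⟨Quot.mk _ ⟨1, Multiplicative.ofAdd v⟩, rfl⟩⟩

end Wreath

section Hexagonal

variable {W : Type*} [AddCommGroup W]

/-- The matrix `((0, 1), (-1, -1))`, a rotation of order `3` of the hexagonal lattice. -/
def rotThird : W × W ≃+ W × W where
  toFun p := (p.2, -p.1 - p.2)
  invFun p := (-p.1 - p.2, p.1)
  left_inv p := Prod.ext (by dsimp only; abel) rfl
  right_inv p := Prod.ext rfl (by simp)
  map_add' p p' := Prod.ext rfl (by simp only [Prod.fst_add, Prod.snd_add]; abel)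

theorem rotThird_apply_apply_add (p : W × W) : rotThird (rotThird p) + rotThird p + p = 0 := by
  ext <;> simp [rotThird]

variable {ι : Type*}

def diffMod3 : (ι → ℤ) × (ι → ℤ) →+ (ι → ZMod 3) :=
  ((Int.castAddHom (ZMod 3)).compLeft ι).comp (AddMonoidHom.fst _ _ - AddMonoidHom.snd _ _)

theorem diffMod3_surjective : Function.Surjective (diffMod3 (ι := ι)) :=
  fun v => ⟨(fun i => ((v i).val : ℤ), 0), by ext i; simp [diffMod3]⟩

theorem self_sub_rotThird (p : W × W) : p - rotThird p = (p.1 - p.2, p.1 + p.2 + p.2) :=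
  Prod.ext rfl (by simp only [Prod.snd_sub, rotThird, AddEquiv.coe_mk, Equiv.coe_fn_mk]; abel)

theorem ker_diffMod3 : (diffMod3 (ι := ι)).ker = rotThird.rangeOneSub := by
  ext ⟨a, b⟩
  simp only [AddMonoidHom.mem_ker, AddEquiv.rangeOneSub, AddMonoidHom.mem_range,
    AddMonoidHom.sub_apply, AddMonoidHom.id_apply, AddEquiv.coe_toAddMonoidHom, self_sub_rotThird]
  constructor
  · intro h
    choose t ht using fun i =>
      (ZMod.intCast_zmod_eq_zero_iff_dvd (a i - b i) 3).mp (congrFun h i)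
    push_cast at ht
    refine ⟨(a - t, -t), Prod.ext (by simp) (funext fun i => ?_)⟩
    simp only [Pi.add_apply, Pi.sub_apply, Pi.neg_apply]
    linarith [ht i]
  · rintro ⟨z, hz⟩
    rw [← hz]
    funext i
    refine (ZMod.intCast_zmod_eq_zero_iff_dvd _ 3).mpr ⟨-z.2 i, ?_⟩
    simp only [AddMonoidHom.sub_apply, AddMonoidHom.coe_fst, AddMonoidHom.coe_snd, Pi.sub_apply,
      Pi.add_apply, Nat.cast_ofNat]
    ring

theorem card_quotient_rangeOneSub_rotThird [Fintype ι] :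
    Nat.card (((ι → ℤ) × (ι → ℤ)) ⧸ (rotThird (W := ι → ℤ)).rangeOneSub) =
      3 ^ Fintype.card ι := by
  rw [← ker_diffMod3, Nat.card_congr
    (QuotientAddGroup.quotientKerEquivOfSurjective _ diffMod3_surjective).toEquiv,
    Nat.card_fun, Nat.card_zmod, Nat.card_eq_fintype_card]

end Hexagonal

def splitEquiv (d : ℕ) : (Fin (2 * d) → ℤ) ≃+ (Fin d → ℤ) × (Fin d → ℤ) :=
  ((LinearEquiv.funCongrLeft ℤ ℤ (finSumFinEquiv.trans (finCongr (two_mul d).symm))).trans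
    (LinearEquiv.sumArrowLequivProdArrow _ _ ℤ ℤ)).toAddEquiv

/-- The `d`-fold direct sum of `rotThird`, on the coordinate pairs `{i, i + d}`. -/
def blockRot (d : ℕ) : (Fin (2 * d) → ℤ) ≃+ (Fin (2 * d) → ℤ) :=
  (splitEquiv d).trans (rotThird.trans (splitEquiv d).symm)

theorem blockRot_apply_apply_add (d : ℕ) (v : Fin (2 * d) → ℤ) :
    blockRot d (blockRot d v) + blockRot d v + v = 0 :=
  (splitEquiv d).injective (by simpa [blockRot] using rotThird_apply_apply_add (splitEquiv d v))

theorem stmt18_general (d : ℕ) :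
    (∃ φ : Wreath 3 (2 * d) ≃* Wreath 3 (2 * d),
      Finite (ReidemeisterClasses φ) ∧ Nat.card (ReidemeisterClasses φ) = 3 ^ d) ∧
    ¬ (∀ φ : Wreath 3 (2 * d) ≃* Wreath 3 (2 * d), Infinite (ReidemeisterClasses φ)) := by
  have hcard :
      Nat.card (ReidemeisterClasses (wreathAut (blockRot d) (AddEquiv.neg (ZMod 3)))) = 3 ^ d := by
    rw [Nat.card_congr (reidemeisterClassesEquiv (blockRot_apply_apply_add d)),
      Nat.card_congr (QuotientAddGroup.congr (blockRot d).rangeOneSub _ (splitEquiv d)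
        (AddEquiv.map_rangeOneSub_conj (splitEquiv d) rotThird)).toEquiv,
      card_quotient_rangeOneSub_rotThird, Fintype.card_fin]
  have hfin := Nat.finite_of_card_ne_zero (hcard ▸ (pow_pos three_pos d).ne')
  exact ⟨⟨_, hfin, hcard⟩, fun h => not_finite_iff_infinite.mpr (h _) hfin⟩

/-- For even `k = 2d ≥ 2`, `ℤ_3 wr ℤ^{2d}` does not have property `R_∞`: there is an
automorphism `φ` with `R(φ) = 3^d < ∞`. -/
theorem stmt18 (d : ℕ) (hd : 1 ≤ d) :
    (∃ φ : Wreath 3 (2 * d) ≃* Wreath 3 (2 * d),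
      Finite (ReidemeisterClasses φ) ∧ Nat.card (ReidemeisterClasses φ) = 3 ^ d) ∧
    ¬ (∀ φ : Wreath 3 (2 * d) ≃* Wreath 3 (2 * d), Infinite (ReidemeisterClasses φ)) :=
  stmt18_general d
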